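/- arXiv:1310.3868 — 9 statements merged into one kernel-verified Lean document; each statement's English description precedes it below -/
import Mathlib

section
/- Let J1, I22, I33, I23 be real numbers with J1 > 0, I22 > 0 and I23 ≠ 0, set J2 = ½(I22+I33) + ½√((I22−I33)²+4I23²) and J3 = ½(I22+I33) − ½√((I22−I33)²+4I23²), and assume J1 ≠ J2 and J1 ≠ J3. Let (ω1, ω2) : ℝ → ℝ² be a differentiable solution of the system J1 ω1' = −I23 ω2² + (I22 − I33) ω2 + I23, I22 ω2' = ω1 (I23 ω2 + I33 − J1). Then the function F(ω1, ω2) = (I23 ω2 + I33 − J1) · exp( I23² ( J1 ω1² + I22 (ω2 − (I22 − J1)/I23)² ) / ( 2 I22 (J1 − J2)(J1 − J3) ) ) is constant along the solution: F(ω1(τ), ω2(τ)) is independent of τ. -/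
/-!
Write `L = I23 ω2 + I33 - J1` and `Q = J1 ω1² + I22 (ω2 - (I22 - J1)/I23)²`. Along a solution
`L' = (I23 ω1 / I22) L`, while the cubic terms of `Q'` cancel and leave `Q' = -2 ω1 D / I23` with
`D = (I22 - J1)(I33 - J1) - I23²`. Since `J2, J3` are the eigenvalues of `[[I22, I23], [I23, I33]]`,
`D = (J1 - J2)(J1 - J3) ≠ 0`, so `X = I23² Q / (2 I22 D)` satisfies `X' = -I23 ω1 / I22 = -L'/L`,
i.e. `exp X` is an integrating factor for `L` and `L · exp X` is constant.
-/

open Real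

theorem sub_mul_sub_eigenvalues_sym2 (a b c x : ℝ) :
    (x - ((a + b) / 2 + √((a - b) ^ 2 + 4 * c ^ 2) / 2)) *
        (x - ((a + b) / 2 - √((a - b) ^ 2 + 4 * c ^ 2) / 2)) =
      (a - x) * (b - x) - c ^ 2 := by
  have hs : √((a - b) ^ 2 + 4 * c ^ 2) ^ 2 = (a - b) ^ 2 + 4 * c ^ 2 :=
    sq_sqrt (by positivity)
  linear_combination (-1 / 4 : ℝ) * hs

theorem mul_exp_eq_of_hasDerivAt {L X L' X' : ℝ → ℝ}
    (hL : ∀ t, HasDerivAt L (L' t) t) (hX : ∀ t, HasDerivAt X (X' t) t)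
    (h : ∀ t, L' t + L t * X' t = 0) (τ σ : ℝ) :
    L τ * exp (X τ) = L σ * exp (X σ) := by
  have hderiv : ∀ t, HasDerivAt (fun s => L s * exp (X s)) 0 t :=
    fun t => ((hL t).mul (hX t).exp).congr_deriv (by linear_combination exp (X t) * h t)
  exact is_const_of_deriv_eq_zero (fun t => (hderiv t).differentiableAt)
    (fun t => (hderiv t).deriv) τ σ

section Suslov

variable {J1 I22 I33 I23 : ℝ} {ω1 ω2 : ℝ → ℝ}

theorem suslov_linear_hasDerivAt
    (hω2 : ∀ τ : ℝ, HasDerivAt ω2 (ω1 τ * (I23 * ω2 τ + I33 - J1) / I22) τ) (t : ℝ) :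
    HasDerivAt (fun s => I23 * ω2 s + I33 - J1)
      (I23 * (ω1 t * (I23 * ω2 t + I33 - J1) / I22)) t :=
  (((hω2 t).const_mul I23).add_const I33).sub_const J1

theorem suslov_quadratic_hasDerivAt (hJ1 : J1 ≠ 0) (hI22 : I22 ≠ 0) (hI23 : I23 ≠ 0)
    (hω1 : ∀ τ : ℝ, HasDerivAt ω1 ((-I23 * (ω2 τ) ^ 2 + (I22 - I33) * ω2 τ + I23) / J1) τ)
    (hω2 : ∀ τ : ℝ, HasDerivAt ω2 (ω1 τ * (I23 * ω2 τ + I33 - J1) / I22) τ) (t : ℝ) :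
    HasDerivAt (fun s => J1 * (ω1 s) ^ 2 + I22 * (ω2 s - (I22 - J1) / I23) ^ 2)
      (-2 * ω1 t * ((I22 - J1) * (I33 - J1) - I23 ^ 2) / I23) t := by
  refine ((((hω1 t).pow 2).const_mul J1).add
    ((((hω2 t).sub_const ((I22 - J1) / I23)).pow 2).const_mul I22)).congr_deriv ?_
  simp only [Nat.cast_ofNat, Nat.add_one_sub_one, pow_one]
  field_simp
  ring

end Suslov

/-- The transcendental first integral `F` of the reduced inhomogeneous Suslov problem
in the generic case `J1 ≠ J2, J3` (with `I13 = 0`, `I23 ≠ 0`). -/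
theorem suslov_transcendental_first_integral
    (J1 I22 I33 I23 J2 J3 : ℝ)
    (hJ1 : 0 < J1) (hI22 : 0 < I22) (hI23 : I23 ≠ 0)
    (hJ2 : J2 = (I22 + I33) / 2 + Real.sqrt ((I22 - I33) ^ 2 + 4 * I23 ^ 2) / 2)
    (hJ3 : J3 = (I22 + I33) / 2 - Real.sqrt ((I22 - I33) ^ 2 + 4 * I23 ^ 2) / 2)
    (h12 : J1 ≠ J2) (h13 : J1 ≠ J3)
    (ω1 ω2 : ℝ → ℝ)
    (hω1 : ∀ τ : ℝ, HasDerivAt ω1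
      ((-I23 * (ω2 τ) ^ 2 + (I22 - I33) * ω2 τ + I23) / J1) τ)
    (hω2 : ∀ τ : ℝ, HasDerivAt ω2
      (ω1 τ * (I23 * ω2 τ + I33 - J1) / I22) τ) :
    ∀ τ σ : ℝ,
      (I23 * ω2 τ + I33 - J1) *
        Real.exp (I23 ^ 2 * (J1 * (ω1 τ) ^ 2 + I22 * (ω2 τ - (I22 - J1) / I23) ^ 2) /
          (2 * I22 * (J1 - J2) * (J1 - J3))) =
      (I23 * ω2 σ + I33 - J1) *
        Real.exp (I23 ^ 2 * (J1 * (ω1 σ) ^ 2 + I22 * (ω2 σ - (I22 - J1) / I23) ^ 2) /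
          (2 * I22 * (J1 - J2) * (J1 - J3))) := by
  have hD : (J1 - J2) * (J1 - J3) = (I22 - J1) * (I33 - J1) - I23 ^ 2 := by
    rw [hJ2, hJ3, sub_mul_sub_eigenvalues_sym2]
  refine mul_exp_eq_of_hasDerivAt (suslov_linear_hasDerivAt hω2)
    (fun t => ((suslov_quadratic_hasDerivAt hJ1.ne' hI22.ne' hI23 hω1 hω2 t).const_mul
      (I23 ^ 2)).div_const (2 * I22 * (J1 - J2) * (J1 - J3))) fun t => ?_
  have h2 : J1 - J2 ≠ 0 := sub_ne_zero.2 h12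
  have h3 : J1 - J3 ≠ 0 := sub_ne_zero.2 h13
  rw [← hD]
  field_simp
  ring
end

section
/- Let J1, I22, I33, I23 be real numbers with J1 > 0, I22 > 0 and I23 ≠ 0, set J2 = ½(I22+I33) + ½√((I22−I33)²+4I23²) and J3 = ½(I22+I33) − ½√((I22−I33)²+4I23²), and assume J1 ≠ J2 and J1 ≠ J3. Define the vector field X(ω1, ω2) = ( (−I23 ω2² + (I22 − I33) ω2 + I23)/J1 , ω1 (I23 ω2 + I33 − J1)/I22 ) on ℝ² and the density ρ(ω1, ω2) = exp( I23² ( J1 ω1² + I22 (ω2 − (I22 − J1)/I23)² ) / ( 2 I22 (J1 − J2)(J1 − J3) ) ). Then the divergence of ρ X vanishes identically: ∂(ρ X₁)/∂ω1 + ∂(ρ X₂)/∂ω2 = 0 on all of ℝ². -/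
/-- The density `ρ` of the invariant measure of the reduced inhomogeneous Suslov problem:
the divergence of `ρ X` vanishes identically. -/
theorem suslov_invariant_measure
    (J1 I22 I33 I23 J2 J3 : ℝ)
    (hJ1 : 0 < J1) (hI22 : 0 < I22) (hI23 : I23 ≠ 0)
    (hJ2 : J2 = (I22 + I33) / 2 + Real.sqrt ((I22 - I33) ^ 2 + 4 * I23 ^ 2) / 2)
    (hJ3 : J3 = (I22 + I33) / 2 - Real.sqrt ((I22 - I33) ^ 2 + 4 * I23 ^ 2) / 2)
    (h12 : J1 ≠ J2) (h13 : J1 ≠ J3)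
    (ρ X1 X2 : ℝ → ℝ → ℝ)
    (hρ : ρ = fun ω1 ω2 =>
      Real.exp (I23 ^ 2 * (J1 * ω1 ^ 2 + I22 * (ω2 - (I22 - J1) / I23) ^ 2) /
        (2 * I22 * (J1 - J2) * (J1 - J3))))
    (hX1 : X1 = fun ω1 ω2 => (-I23 * ω2 ^ 2 + (I22 - I33) * ω2 + I23) / J1)
    (hX2 : X2 = fun ω1 ω2 => ω1 * (I23 * ω2 + I33 - J1) / I22) :
    ∀ ω1 ω2 : ℝ,
      deriv (fun x => ρ x ω2 * X1 x ω2) ω1 + deriv (fun y => ρ ω1 y * X2 ω1 y) ω2 = 0 := by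
  subst hρ hX1 hX2
  intro ω1 ω2
  set D : ℝ := 2 * I22 * (J1 - J2) * (J1 - J3) with hD
  set a : ℝ := (I22 - I33) ^ 2 + 4 * I23 ^ 2 with ha
  have hane : 0 ≤ a := by positivity
  have hkey : (J1 - J2) * (J1 - J3) = (I22 - J1) * (I33 - J1) - I23 ^ 2 := by
    have hs : Real.sqrt a ^ 2 = a := Real.sq_sqrt hane
    rw [hJ2, hJ3]; nlinarith [hs]
  have hDne : D ≠ 0 := by
    have h2 : J1 - J2 ≠ 0 := sub_ne_zero.mpr h12
    have h3 : J1 - J3 ≠ 0 := sub_ne_zero.mpr h13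
    simp [hD]
    push_neg
    exact ⟨⟨hI22.ne', h2⟩, h3⟩
  set c : ℝ := (I22 - J1) / I23 with hc
  -- derivative in ω1
  have h1 : HasDerivAt
      (fun x : ℝ => Real.exp (I23 ^ 2 * (J1 * x ^ 2 + I22 * (ω2 - c) ^ 2) / D) *
        ((-I23 * ω2 ^ 2 + (I22 - I33) * ω2 + I23) / J1))
      ((Real.exp (I23 ^ 2 * (J1 * ω1 ^ 2 + I22 * (ω2 - c) ^ 2) / D) *
        (I23 ^ 2 * (J1 * (2 * ω1 ^ 1)) / D)) *
        ((-I23 * ω2 ^ 2 + (I22 - I33) * ω2 + I23) / J1)) ω1 := by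
    exact (((((hasDerivAt_pow 2 ω1).const_mul J1).add_const
      (I22 * (ω2 - c) ^ 2)).const_mul (I23 ^ 2)).div_const D).exp.mul_const _
  -- derivative in ω2
  have hinner : HasDerivAt
      (fun y : ℝ => I23 ^ 2 * (J1 * ω1 ^ 2 + I22 * (y - c) ^ 2) / D)
      (I23 ^ 2 * (I22 * (2 * (ω2 - c) ^ 1)) / D) ω2 := by
    have h0 : HasDerivAt (fun y : ℝ => (y - c) ^ 2) (2 * (ω2 - c) ^ 1 * 1) ω2 :=
      ((hasDerivAt_id ω2).sub_const c).pow 2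
    have := (((h0.const_mul I22).const_add (J1 * ω1 ^ 2)).const_mul (I23 ^ 2)).div_const D
    simpa using this
  have hlin : HasDerivAt (fun y : ℝ => ω1 * (I23 * y + I33 - J1) / I22)
      (ω1 * I23 / I22) ω2 := by
    have h0 : HasDerivAt (fun y : ℝ => I23 * y + I33 - J1) I23 ω2 := by
      have := ((hasDerivAt_id ω2).const_mul I23).add_const (I33 - J1)
      simpa [add_sub_assoc] using this
    have := (h0.const_mul ω1).div_const I22
    simpa using this
  have h2 : HasDerivAt
      (fun y : ℝ => Real.exp (I23 ^ 2 * (J1 * ω1 ^ 2 + I22 * (y - c) ^ 2) / D) *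
        (ω1 * (I23 * y + I33 - J1) / I22))
      ((Real.exp (I23 ^ 2 * (J1 * ω1 ^ 2 + I22 * (ω2 - c) ^ 2) / D) *
        (I23 ^ 2 * (I22 * (2 * (ω2 - c) ^ 1)) / D)) *
        (ω1 * (I23 * ω2 + I33 - J1) / I22) +
        Real.exp (I23 ^ 2 * (J1 * ω1 ^ 2 + I22 * (ω2 - c) ^ 2) / D) *
        (ω1 * I23 / I22)) ω2 := hinner.exp.mul hlin
  rw [h1.deriv, h2.deriv]
  set E : ℝ := Real.exp (I23 ^ 2 * (J1 * ω1 ^ 2 + I22 * (ω2 - c) ^ 2) / D) with hE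
  have hPne : (I22 - J1) * (I33 - J1) - I23 ^ 2 ≠ 0 := by
    rw [← hkey]
    exact mul_ne_zero (sub_ne_zero.mpr h12) (sub_ne_zero.mpr h13)
  have hD' : D = 2 * I22 * ((I22 - J1) * (I33 - J1) - I23 ^ 2) := by
    rw [hD, mul_assoc, hkey]
  rw [hc, hD']
  field_simp
  ring
end

section
/- Let J1, I22, I33, I23 be real numbers with J1 > 0, I22 > 0, I23 ≠ 0, and set J2 = ½(I22+I33) + ½√((I22−I33)²+4I23²), J3 = ½(I22+I33) − ½√((I22−I33)²+4I23²). Then for every constant c0 ∈ ℝ, the curve ω2(τ) = (J1 − I33)/I23, ω1(τ) = −((J1 − J2)(J1 − J3)/(I23 J1)) τ + c0 is a solution of the system J1 ω1' = −I23 ω2² + (I22 − I33) ω2 + I23, I22 ω2' = ω1 (I23 ω2 + I33 − J1). -/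
/-! Along the line `ω2 = (J1 − I33)/I23` the factor `I23 ω2 + I33 − J1` vanishes, so `ω2` stays
constant, and then the right-hand side of the `ω1` equation is the constant
`−((J1 − I22)(J1 − I33) − I23²)/(I23 J1)`. Since `J2, J3` are the eigenvalues of the symmetric
block `[[I22, I23], [I23, I33]]`, this numerator is the characteristic polynomial
`(J1 − J2)(J1 − J3)`, so `ω1` is affine with exactly the stated slope. -/

lemma sub_mul_sub_eigenvalues (a b c x : ℝ) :
    (x - ((a + b) / 2 + √((a - b) ^ 2 + 4 * c ^ 2) / 2)) *
      (x - ((a + b) / 2 - √((a - b) ^ 2 + 4 * c ^ 2) / 2)) = (x - a) * (x - b) - c ^ 2 := by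
  have hs := Real.sq_sqrt (by positivity : (0 : ℝ) ≤ (a - b) ^ 2 + 4 * c ^ 2)
  linear_combination (-1 / 4 : ℝ) * hs

lemma mul_div_add_sub_eq_zero {K : Type*} [Field K] {c : K} (hc : c ≠ 0) (b x : K) :
    c * ((x - b) / c) + b - x = 0 := by
  field_simp
  ring

lemma quadratic_eval_div {K : Type*} [Field K] {c : K} (hc : c ≠ 0) (a b x : K) :
    -c * ((x - b) / c) ^ 2 + (a - b) * ((x - b) / c) + c = -(((x - a) * (x - b) - c ^ 2) / c) := by
  field_simp
  ring

theorem suslov_particular_solution_general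
    (J1 I22 I33 I23 J2 J3 : ℝ)
    (hI23 : I23 ≠ 0)
    (hJ2 : J2 = (I22 + I33) / 2 + Real.sqrt ((I22 - I33) ^ 2 + 4 * I23 ^ 2) / 2)
    (hJ3 : J3 = (I22 + I33) / 2 - Real.sqrt ((I22 - I33) ^ 2 + 4 * I23 ^ 2) / 2)
    (c0 : ℝ) (ω1 ω2 : ℝ → ℝ)
    (hω1def : ω1 = fun τ : ℝ => -((J1 - J2) * (J1 - J3) / (I23 * J1)) * τ + c0)
    (hω2def : ω2 = fun _ : ℝ => (J1 - I33) / I23) :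
    ∀ τ : ℝ,
      HasDerivAt ω1 ((-I23 * (ω2 τ) ^ 2 + (I22 - I33) * ω2 τ + I23) / J1) τ ∧
      HasDerivAt ω2 (ω1 τ * (I23 * ω2 τ + I33 - J1) / I22) τ := by
  intro τ
  have hchar := sub_mul_sub_eigenvalues I22 I33 I23 J1
  rw [← hJ2, ← hJ3] at hchar
  subst hω1def hω2def
  refine ⟨?_, ?_⟩
  · rw [quadratic_eval_div hI23, ← hchar, neg_div, div_div]
    exact (((hasDerivAt_id' τ).const_mul _).add_const c0).congr_deriv (mul_one _)
  · rw [mul_div_add_sub_eq_zero hI23, mul_zero, zero_div]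
    exact hasDerivAt_const τ _

/-- The explicit particular solution of the reduced inhomogeneous Suslov problem along the
invariant horizontal line `ω2 = (J1 − I33)/I23`. -/
theorem suslov_particular_solution
    (J1 I22 I33 I23 J2 J3 : ℝ)
    (hJ1 : 0 < J1) (hI22 : 0 < I22) (hI23 : I23 ≠ 0)
    (hJ2 : J2 = (I22 + I33) / 2 + Real.sqrt ((I22 - I33) ^ 2 + 4 * I23 ^ 2) / 2)
    (hJ3 : J3 = (I22 + I33) / 2 - Real.sqrt ((I22 - I33) ^ 2 + 4 * I23 ^ 2) / 2)
    (c0 : ℝ) (ω1 ω2 : ℝ → ℝ)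
    (hω1def : ω1 = fun τ : ℝ => -((J1 - J2) * (J1 - J3) / (I23 * J1)) * τ + c0)
    (hω2def : ω2 = fun _ : ℝ => (J1 - I33) / I23) :
    ∀ τ : ℝ,
      HasDerivAt ω1 ((-I23 * (ω2 τ) ^ 2 + (I22 - I33) * ω2 τ + I23) / J1) τ ∧
      HasDerivAt ω2 (ω1 τ * (I23 * ω2 τ + I33 - J1) / I22) τ :=
  suslov_particular_solution_general J1 I22 I33 I23 J2 J3 hI23 hJ2 hJ3 c0 ω1 ω2 hω1def hω2def
end

section
/- Let J1, I22, I33, I23 be real numbers with J1 > 0, I22 > 0 and I23 ≠ 0. If (ω1, ω2) : ℝ → ℝ² is a differentiable solution of the system J1 ω1' = −I23 ω2² + (I22 − I33) ω2 + I23, I22 ω2' = ω1 (I23 ω2 + I33 − J1) with ω2(0) = (J1 − I33)/I23, then ω2(τ) = (J1 − I33)/I23 for all τ. Consequently the horizontal line ω2 = (J1 − I33)/I23 and each of the two open half-planes ω2 > (J1 − I33)/I23 and ω2 < (J1 − I33)/I23 are invariant under the flow. -/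
/-!
Writing `c = (J1 − I33)/I23`, the second equation reads `ω2' = (I23 ω1 / I22) (ω2 − c)`, a scalar
linear equation for `ω2 − c` whose coefficient is continuous because `ω1` is differentiable.
Its integrating factor gives `ω2 τ − c = (ω2 0 − c) exp (∫₀^τ I23 ω1 / I22)`, so the sign of
`ω2 − c` never changes.
-/

theorem eq_exp_integral_smul_of_hasDerivAt {E : Type*} [NormedAddCommGroup E] [NormedSpace ℝ E]
    {g : ℝ → ℝ} {y : ℝ → E} (hg : Continuous g) (hy : ∀ t, HasDerivAt y (g t • y t) t) (t : ℝ) :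
    y t = Real.exp (∫ s in (0 : ℝ)..t, g s) • y 0 := by
  set G : ℝ → ℝ := fun t => ∫ s in (0 : ℝ)..t, g s
  have hG : ∀ t, HasDerivAt G (g t) t := fun t => (hg.integral_hasStrictDerivAt 0 t).hasDerivAt
  have hdamped : ∀ t, HasDerivAt (fun t => Real.exp (-G t) • y t) 0 t := fun t =>
    ((hG t).neg.exp.smul (hy t)).congr_deriv <| by
      rw [smul_smul, ← add_smul, mul_neg, add_neg_cancel, zero_smul]
  have hconst := is_const_of_deriv_eq_zero (fun t => (hdamped t).differentiableAt)
    (fun t => (hdamped t).deriv) t 0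
  simp only [G, intervalIntegral.integral_same, neg_zero, Real.exp_zero, one_smul] at hconst
  rw [← hconst, smul_smul, ← Real.exp_add, add_neg_cancel, Real.exp_zero, one_smul]

theorem suslov_invariant_line_and_halfplanes_general
    (J1 I22 I33 I23 : ℝ)
    (hI23 : I23 ≠ 0)
    (ω1 ω2 : ℝ → ℝ)
    (hω1 : ∀ τ : ℝ, HasDerivAt ω1
      ((-I23 * (ω2 τ) ^ 2 + (I22 - I33) * ω2 τ + I23) / J1) τ)
    (hω2 : ∀ τ : ℝ, HasDerivAt ω2
      (ω1 τ * (I23 * ω2 τ + I33 - J1) / I22) τ) :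
    (ω2 0 = (J1 - I33) / I23 → ∀ τ : ℝ, ω2 τ = (J1 - I33) / I23) ∧
    (ω2 0 > (J1 - I33) / I23 → ∀ τ : ℝ, ω2 τ > (J1 - I33) / I23) ∧
    (ω2 0 < (J1 - I33) / I23 → ∀ τ : ℝ, ω2 τ < (J1 - I33) / I23) := by
  set c := (J1 - I33) / I23
  have hcoeff : Continuous fun τ => I23 * ω1 τ / I22 :=
    (continuous_const.mul (continuous_iff_continuousAt.2 fun τ => (hω1 τ).continuousAt)).div_const
      I22
  have hlinear : ∀ τ, HasDerivAt (fun τ => ω2 τ - c) ((I23 * ω1 τ / I22) • (ω2 τ - c)) τ :=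
    fun τ => (hω2 τ).sub_const c |>.congr_deriv (by simp only [c, smul_eq_mul]; field_simp; ring)
  have hsol τ := eq_exp_integral_smul_of_hasDerivAt hcoeff hlinear τ
  simp only [smul_eq_mul] at hsol
  refine ⟨fun h0 τ => ?_, fun h0 τ => ?_, fun h0 τ => ?_⟩
  · simpa [h0, sub_eq_zero] using hsol τ
  · nlinarith [hsol τ, Real.exp_pos (∫ s in (0 : ℝ)..τ, I23 * ω1 s / I22)]
  · nlinarith [hsol τ, Real.exp_pos (∫ s in (0 : ℝ)..τ, I23 * ω1 s / I22)]

/-- The horizontal line `ω2 = (J1 − I33)/I23` and the two open half-planes it bounds are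
invariant under the flow of the reduced inhomogeneous Suslov problem. -/
theorem suslov_invariant_line_and_halfplanes
    (J1 I22 I33 I23 : ℝ)
    (hJ1 : 0 < J1) (hI22 : 0 < I22) (hI23 : I23 ≠ 0)
    (ω1 ω2 : ℝ → ℝ)
    (hω1 : ∀ τ : ℝ, HasDerivAt ω1
      ((-I23 * (ω2 τ) ^ 2 + (I22 - I33) * ω2 τ + I23) / J1) τ)
    (hω2 : ∀ τ : ℝ, HasDerivAt ω2
      (ω1 τ * (I23 * ω2 τ + I33 - J1) / I22) τ) :
    (ω2 0 = (J1 - I33) / I23 → ∀ τ : ℝ, ω2 τ = (J1 - I33) / I23) ∧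
    (ω2 0 > (J1 - I33) / I23 → ∀ τ : ℝ, ω2 τ > (J1 - I33) / I23) ∧
    (ω2 0 < (J1 - I33) / I23 → ∀ τ : ℝ, ω2 τ < (J1 - I33) / I23) :=
  suslov_invariant_line_and_halfplanes_general J1 I22 I33 I23 hI23 ω1 ω2 hω1 hω2
end

section
/- Let J1, I22, I33, I23 be real numbers with J1 > 0, I22 > 0, I23 ≠ 0, and set J2 = ½(I22+I33) + ½√((I22−I33)²+4I23²), J3 = ½(I22+I33) − ½√((I22−I33)²+4I23²). Let X(ω1, ω2) = ( (−I23 ω2² + (I22 − I33) ω2 + I23)/J1 , ω1 (I23 ω2 + I33 − J1)/I22 ) and let ω2⁺ = (I22 − I33 + √((I22−I33)² + 4 I23²))/(2 I23), ω2⁻ = (I22 − I33 − √((I22−I33)² + 4 I23²))/(2 I23). Then the Jacobian matrix of X at the equilibrium (0, ω2⁺) has trace 0 and determinant −(J1 − J2)(J2 − J3)/(J1 I22), and the Jacobian matrix of X at (0, ω2⁻) has trace 0 and determinant −(J1 − J3)(J3 − J2)/(J1 I22); equivalently, the eigenvalues of these Jacobian matrices are ±λ₊ and ±λ₋ respectively,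 where λ₊² = (J1 − J2)(J2 − J3)/(J1 I22) and λ₋² = (J1 − J3)(J3 − J2)/(J1 I22). -/
/-!
On the axis `ω1 = 0` the first component does not depend on `ω1` and the second vanishes
identically, so the Jacobian is antidiagonal and hence traceless. Writing
`s = √((I22 - I33)² + 4 I23²)`, the equilibria satisfy `I23 ω2± = (I22 - I33 ± s) / 2`, so the
off-diagonal entries become `∓s / J1` and `(J2 - J1) / I22` resp. `(J3 - J1) / I22`, while
`J2 - J3 = s`.
-/

noncomputable def planarJacobian (F G : ℝ → ℝ → ℝ) (a b : ℝ) : Matrix (Fin 2) (Fin 2) ℝ :=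
  !![deriv (fun x => F x b) a, deriv (fun y => F a y) b;
     deriv (fun x => G x b) a, deriv (fun y => G a y) b]

section Suslov

variable (J1 I22 I33 I23 : ℝ)

noncomputable def suslovField₁ (_ω1 ω2 : ℝ) : ℝ := (-I23 * ω2 ^ 2 + (I22 - I33) * ω2 + I23) / J1

noncomputable def suslovField₂ (ω1 ω2 : ℝ) : ℝ := ω1 * (I23 * ω2 + I33 - J1) / I22

theorem planarJacobian_suslovField_zero (w : ℝ) :
    planarJacobian (suslovField₁ J1 I22 I33 I23) (suslovField₂ J1 I22 I33 I23) 0 w =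
      !![0, (-(2 * I23 * w) + (I22 - I33)) / J1; (I23 * w + I33 - J1) / I22, 0] := by
  have hX1 : HasDerivAt (suslovField₁ J1 I22 I33 I23 0)
      ((-(2 * I23 * w) + (I22 - I33)) / J1) w := by
    refine ((((hasDerivAt_pow 2 w).const_mul (-I23)).add
      ((hasDerivAt_id' w).const_mul (I22 - I33))).add_const I23).div_const J1 |>.congr_deriv ?_
    norm_num
    ring
  have hX2 : HasDerivAt (fun x => suslovField₂ J1 I22 I33 I23 x w)
      ((I23 * w + I33 - J1) / I22) 0 := by
    simpa [suslovField₂] using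
      ((hasDerivAt_id (0 : ℝ)).mul_const (I23 * w + I33 - J1)).div_const I22
  ext i j
  fin_cases i <;> fin_cases j
  · simp [planarJacobian, suslovField₁]
  · simp [planarJacobian, hX1.deriv]
  · simp [planarJacobian, hX2.deriv]
  · simp [planarJacobian, suslovField₂]

theorem trace_planarJacobian_suslovField_zero (w : ℝ) :
    (planarJacobian (suslovField₁ J1 I22 I33 I23) (suslovField₂ J1 I22 I33 I23) 0 w).trace = 0 := by
  simp [planarJacobian_suslovField_zero]

/-- The equilibria are the points `(0, (I22 - I33 + t) / (2 I23))` with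
`t = ±√((I22 - I33)² + 4 I23²)`, and then `{J, J'} = {J2, J3}`. -/
theorem det_planarJacobian_suslovField_zero {t J J' : ℝ} (hI23 : I23 ≠ 0)
    (hJ : J = (I22 + I33 + t) / 2) (hJ' : J' = (I22 + I33 - t) / 2) :
    (planarJacobian (suslovField₁ J1 I22 I33 I23) (suslovField₂ J1 I22 I33 I23) 0
        ((I22 - I33 + t) / (2 * I23))).det = -((J1 - J) * (J - J') / (J1 * I22)) := by
  have hω : I23 * ((I22 - I33 + t) / (2 * I23)) = (I22 - I33 + t) / 2 := by
    field_simp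
  rw [planarJacobian_suslovField_zero, Matrix.det_fin_two_of, mul_assoc, hω, hJ, hJ']
  ring

end Suslov

theorem suslov_jacobian_at_equilibria_general
    (J1 I22 I33 I23 J2 J3 : ℝ)
    (hI23 : I23 ≠ 0)
    (hJ2 : J2 = (I22 + I33) / 2 + Real.sqrt ((I22 - I33) ^ 2 + 4 * I23 ^ 2) / 2)
    (hJ3 : J3 = (I22 + I33) / 2 - Real.sqrt ((I22 - I33) ^ 2 + 4 * I23 ^ 2) / 2)
    (X1 X2 : ℝ → ℝ → ℝ)
    (hX1 : X1 = fun ω1 ω2 => (-I23 * ω2 ^ 2 + (I22 - I33) * ω2 + I23) / J1)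
    (hX2 : X2 = fun ω1 ω2 => ω1 * (I23 * ω2 + I33 - J1) / I22)
    (ω2p ω2m : ℝ)
    (hp : ω2p = (I22 - I33 + Real.sqrt ((I22 - I33) ^ 2 + 4 * I23 ^ 2)) / (2 * I23))
    (hm : ω2m = (I22 - I33 - Real.sqrt ((I22 - I33) ^ 2 + 4 * I23 ^ 2)) / (2 * I23)) :
    (deriv (fun x => X1 x ω2p) 0 + deriv (fun y => X2 0 y) ω2p = 0 ∧
     deriv (fun x => X1 x ω2p) 0 * deriv (fun y => X2 0 y) ω2p -
       deriv (fun y => X1 0 y) ω2p * deriv (fun x => X2 x ω2p) 0 =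
       -((J1 - J2) * (J2 - J3) / (J1 * I22))) ∧
    (deriv (fun x => X1 x ω2m) 0 + deriv (fun y => X2 0 y) ω2m = 0 ∧
     deriv (fun x => X1 x ω2m) 0 * deriv (fun y => X2 0 y) ω2m -
       deriv (fun y => X1 0 y) ω2m * deriv (fun x => X2 x ω2m) 0 =
       -((J1 - J3) * (J3 - J2) / (J1 * I22))) := by
  set s := Real.sqrt ((I22 - I33) ^ 2 + 4 * I23 ^ 2)
  obtain rfl : X1 = suslovField₁ J1 I22 I33 I23 := hX1
  obtain rfl : X2 = suslovField₂ J1 I22 I33 I23 := hX2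
  have hJ2' : J2 = (I22 + I33 + s) / 2 := by rw [hJ2]; ring
  have hJ3' : J3 = (I22 + I33 - s) / 2 := by rw [hJ3]; ring
  have hdp := det_planarJacobian_suslovField_zero J1 I22 I33 I23 hI23 hJ2' hJ3'
  have hdm := det_planarJacobian_suslovField_zero J1 I22 I33 I23 (t := -s) (J := J3) (J' := J2)
    hI23 (by rw [hJ3']; ring) (by rw [hJ2']; ring)
  have htp := trace_planarJacobian_suslovField_zero J1 I22 I33 I23 ω2p
  have htm := trace_planarJacobian_suslovField_zero J1 I22 I33 I23 ω2m
  rw [← sub_eq_add_neg, ← hm] at hdm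
  rw [← hp] at hdp
  simp only [Matrix.trace_fin_two, Matrix.det_fin_two, planarJacobian, Matrix.of_apply,
    Matrix.cons_val', Matrix.cons_val_zero, Matrix.cons_val_one, Matrix.empty_val',
    Matrix.cons_val_fin_one] at htp htm hdp hdm
  exact ⟨⟨htp, hdp⟩, ⟨htm, hdm⟩⟩

/-- The Jacobian matrices of the reduced inhomogeneous Suslov vector field at its two
equilibria `(0, ω2⁺)` and `(0, ω2⁻)` are traceless, with determinants
`−(J1−J2)(J2−J3)/(J1 I22)` and `−(J1−J3)(J3−J2)/(J1 I22)` respectively, i.e., their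
eigenvalues are `±λ₊` and `±λ₋` with `λ₊² = (J1−J2)(J2−J3)/(J1 I22)`,
`λ₋² = (J1−J3)(J3−J2)/(J1 I22)`. -/
theorem suslov_jacobian_at_equilibria
    (J1 I22 I33 I23 J2 J3 : ℝ)
    (hJ1 : 0 < J1) (hI22 : 0 < I22) (hI23 : I23 ≠ 0)
    (hJ2 : J2 = (I22 + I33) / 2 + Real.sqrt ((I22 - I33) ^ 2 + 4 * I23 ^ 2) / 2)
    (hJ3 : J3 = (I22 + I33) / 2 - Real.sqrt ((I22 - I33) ^ 2 + 4 * I23 ^ 2) / 2)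
    (X1 X2 : ℝ → ℝ → ℝ)
    (hX1 : X1 = fun ω1 ω2 => (-I23 * ω2 ^ 2 + (I22 - I33) * ω2 + I23) / J1)
    (hX2 : X2 = fun ω1 ω2 => ω1 * (I23 * ω2 + I33 - J1) / I22)
    (ω2p ω2m : ℝ)
    (hp : ω2p = (I22 - I33 + Real.sqrt ((I22 - I33) ^ 2 + 4 * I23 ^ 2)) / (2 * I23))
    (hm : ω2m = (I22 - I33 - Real.sqrt ((I22 - I33) ^ 2 + 4 * I23 ^ 2)) / (2 * I23)) :
    (deriv (fun x => X1 x ω2p) 0 + deriv (fun y => X2 0 y) ω2p = 0 ∧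
     deriv (fun x => X1 x ω2p) 0 * deriv (fun y => X2 0 y) ω2p -
       deriv (fun y => X1 0 y) ω2p * deriv (fun x => X2 x ω2p) 0 =
       -((J1 - J2) * (J2 - J3) / (J1 * I22))) ∧
    (deriv (fun x => X1 x ω2m) 0 + deriv (fun y => X2 0 y) ω2m = 0 ∧
     deriv (fun x => X1 x ω2m) 0 * deriv (fun y => X2 0 y) ω2m -
       deriv (fun y => X1 0 y) ω2m * deriv (fun x => X2 x ω2m) 0 =
       -((J1 - J3) * (J3 - J2) / (J1 * I22))) :=
  suslov_jacobian_at_equilibria_general J1 I22 I33 I23 J2 J3 hI23 hJ2 hJ3 X1 X2 hX1 hX2 ω2p ω2m hp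
    hm
end

section
/- Let A, B, C ∈ ℝ and let (ξ, η) : ℝ → ℝ² be a differentiable solution of the system ξ' = −A (η − B) η, η' = C ξ η. Then the function G(ξ, η) = A (η − B)² + C ξ² is constant along the solution. -/
/-! Along a solution, `d/dτ [A(η − B)² + Cξ²] = 2A(η − B)·Cξη + 2Cξ·(−A(η − B)η) = 0`,
so the mean value theorem makes `G` constant. -/

theorem hasDerivAt_normalForm_firstIntegral {A B C : ℝ} {ξ η : ℝ → ℝ}
    (hξ : ∀ τ : ℝ, HasDerivAt ξ (-A * (η τ - B) * η τ) τ)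
    (hη : ∀ τ : ℝ, HasDerivAt η (C * ξ τ * η τ) τ) (τ : ℝ) :
    HasDerivAt (fun t => A * (η t - B) ^ 2 + C * ξ t ^ 2) 0 τ := by
  refine ((((hη τ).sub_const B).pow 2).const_mul A).add (((hξ τ).pow 2).const_mul C)
    |>.congr_deriv ?_
  ring

/-- `G(ξ, η) = A(η − B)² + Cξ²` is a first integral of the normal-form system
`ξ' = −A(η − B)η`, `η' = Cξη`. -/
theorem normal_form_first_integral
    (A B C : ℝ) (ξ η : ℝ → ℝ)
    (hξ : ∀ τ : ℝ, HasDerivAt ξ (-A * (η τ - B) * η τ) τ)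
    (hη : ∀ τ : ℝ, HasDerivAt η (C * ξ τ * η τ) τ) :
    ∀ τ σ : ℝ,
      A * (η τ - B) ^ 2 + C * (ξ τ) ^ 2 = A * (η σ - B) ^ 2 + C * (ξ σ) ^ 2 := by
  have hG := hasDerivAt_normalForm_firstIntegral hξ hη
  exact is_const_of_deriv_eq_zero (fun τ => (hG τ).differentiableAt) (fun τ => (hG τ).deriv)
end

section
/- Let A, B, C, g be real numbers with A > 0, C > 0, B ≠ 0 and 0 < g < A B². Then the functions ξ(τ) = √(g/C) · (√(AB² − g) sin(√C √(AB² − g) τ)) / (√A B + √g cos(√C √(AB² − g) τ)) and η(τ) = −√(g/A) · (√g + √A B cos(√C √(AB² − g) τ)) / (√A B + √g cos(√C √(AB² − g) τ)) + B are defined for all τ ∈ ℝ, satisfy ξ' = −A (η − B) η and η' = C ξ η, are periodic with period 2π/(√C √(AB² − g)), and satisfy A (η(τ) − B)² + C ξ(τ)² = g for all τ. -/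
/-!
Write `a = √A`, `c = √C`, `s = √g`, `r = √(AB² − g)` and `θ = c r τ`. Then
`ξ = (s r / c) sin θ / D` and `η = r² / (a D)` with `D = aB + s cos θ`, a rational
parametrisation of the ellipse `G = g` by the angle `θ`; `D` never vanishes because `s < |aB|`.
The first integral and both equations of motion are identities between rational functions of
`cos θ` and `sin θ`, modulo `sin² θ + cos² θ = 1` and `r² = a²B² − s²`, and the period is
inherited from `cos` and `sin`.
-/

open Real

theorem add_mul_cos_ne_zero {k s : ℝ} (h : s ^ 2 < k ^ 2) (θ : ℝ) : k + s * cos θ ≠ 0 := by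
  intro h0
  have hk : k = -(s * cos θ) := by linarith
  rw [hk, neg_sq, mul_pow] at h
  nlinarith [cos_sq_le_one θ, sq_nonneg s]

section Orbit

variable (a c s r B : ℝ)

noncomputable def orbitXi (θ : ℝ) : ℝ := s / c * (r * sin θ) / (a * B + s * cos θ)

noncomputable def orbitEta (θ : ℝ) : ℝ := -(s / a * (s + a * B * cos θ) / (a * B + s * cos θ)) + B

theorem orbitXi_periodic : Function.Periodic (orbitXi a c s r B) (2 * π) := fun θ => by
  simp only [orbitXi, sin_add_two_pi, cos_add_two_pi]

theorem orbitEta_periodic : Function.Periodic (orbitEta a s B) (2 * π) := fun θ => by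
  simp only [orbitEta, cos_add_two_pi]

variable {a c s r B}

theorem orbit_first_integral (ha : a ≠ 0) (hc : c ≠ 0) (hr : r ^ 2 = a ^ 2 * B ^ 2 - s ^ 2)
    {θ : ℝ} (hD : a * B + s * cos θ ≠ 0) :
    a ^ 2 * (orbitEta a s B θ - B) ^ 2 + c ^ 2 * orbitXi a c s r B θ ^ 2 = s ^ 2 := by
  unfold orbitEta orbitXi
  field_simp
  rw [hr, sin_sq]
  ring

theorem hasDerivAt_orbitXi {θ : ℝ} (hD : a * B + s * cos θ ≠ 0) :
    HasDerivAt (orbitXi a c s r B)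
      (s * r / c * (s + a * B * cos θ) / (a * B + s * cos θ) ^ 2) θ := by
  have h := (((hasDerivAt_sin θ).const_mul r).const_mul (s / c)).div
    (((hasDerivAt_cos θ).const_mul s).const_add (a * B)) hD
  refine h.congr_deriv ?_
  field_simp
  rw [sin_sq]
  ring

theorem hasDerivAt_orbitEta {θ : ℝ} (hD : a * B + s * cos θ ≠ 0) :
    HasDerivAt (orbitEta a s B)
      (s * (a ^ 2 * B ^ 2 - s ^ 2) / a * sin θ / (a * B + s * cos θ) ^ 2) θ := by
  have h := ((((hasDerivAt_cos θ).const_mul (a * B)).const_add s).const_mul (s / a)).div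
    (((hasDerivAt_cos θ).const_mul s).const_add (a * B)) hD |>.neg.add_const B
  refine h.congr_deriv ?_
  field_simp
  ring

theorem hasDerivAt_orbitXi_comp_mul (ha : a ≠ 0) (hc : c ≠ 0)
    (hr : r ^ 2 = a ^ 2 * B ^ 2 - s ^ 2) {τ : ℝ} (hD : a * B + s * cos (c * r * τ) ≠ 0) :
    HasDerivAt (fun τ => orbitXi a c s r B (c * r * τ))
      (-a ^ 2 * (orbitEta a s B (c * r * τ) - B) * orbitEta a s B (c * r * τ)) τ := by
  have h :=
    (hasDerivAt_orbitXi (c := c) (r := r) hD).comp τ ((hasDerivAt_id τ).const_mul (c * r))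
  refine h.congr_deriv ?_
  generalize c * r * τ = θ at hD ⊢
  unfold orbitEta
  field_simp
  rw [hr]
  ring

theorem hasDerivAt_orbitEta_comp_mul (ha : a ≠ 0) {τ : ℝ} (hD : a * B + s * cos (c * r * τ) ≠ 0) :
    HasDerivAt (fun τ => orbitEta a s B (c * r * τ))
      (c ^ 2 * orbitXi a c s r B (c * r * τ) * orbitEta a s B (c * r * τ)) τ := by
  have h := (hasDerivAt_orbitEta hD).comp τ ((hasDerivAt_id τ).const_mul (c * r))
  refine h.congr_deriv ?_
  unfold orbitXi orbitEta
  field_simp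
  ring

end Orbit

theorem normal_form_periodic_solutions_general
    (A B C g : ℝ)
    (hA : 0 < A) (hC : 0 < C)
    (hg0 : 0 < g) (hg : g < A * B ^ 2)
    (ξ η : ℝ → ℝ)
    (hξ : ξ = fun τ : ℝ => Real.sqrt (g / C) *
      (Real.sqrt (A * B ^ 2 - g) * Real.sin (Real.sqrt C * Real.sqrt (A * B ^ 2 - g) * τ)) /
      (Real.sqrt A * B + Real.sqrt g * Real.cos (Real.sqrt C * Real.sqrt (A * B ^ 2 - g) * τ)))
    (hη : η = fun τ : ℝ => -(Real.sqrt (g / A) *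
      (Real.sqrt g + Real.sqrt A * B * Real.cos (Real.sqrt C * Real.sqrt (A * B ^ 2 - g) * τ)) /
      (Real.sqrt A * B + Real.sqrt g * Real.cos (Real.sqrt C * Real.sqrt (A * B ^ 2 - g) * τ))) +
      B) :
    (∀ τ : ℝ,
      Real.sqrt A * B + Real.sqrt g * Real.cos (Real.sqrt C * Real.sqrt (A * B ^ 2 - g) * τ) ≠ 0) ∧
    (∀ τ : ℝ, HasDerivAt ξ (-A * (η τ - B) * η τ) τ ∧ HasDerivAt η (C * ξ τ * η τ) τ) ∧
    Function.Periodic ξ (2 * Real.pi / (Real.sqrt C * Real.sqrt (A * B ^ 2 - g))) ∧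
    Function.Periodic η (2 * Real.pi / (Real.sqrt C * Real.sqrt (A * B ^ 2 - g))) ∧
    ∀ τ : ℝ, A * (η τ - B) ^ 2 + C * (ξ τ) ^ 2 = g := by
  set a := √A
  set c := √C
  set s := √g
  set r := √(A * B ^ 2 - g)
  have ha : a ^ 2 = A := sq_sqrt hA.le
  have hc : c ^ 2 = C := sq_sqrt hC.le
  have hs : s ^ 2 = g := sq_sqrt hg0.le
  have hr : r ^ 2 = a ^ 2 * B ^ 2 - s ^ 2 := by rw [ha, hs]; exact sq_sqrt (by linarith)
  have hD : ∀ θ, a * B + s * cos θ ≠ 0 := add_mul_cos_ne_zero (by rw [mul_pow, ha, hs]; exact hg)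
  have ha0 : a ≠ 0 := (sqrt_pos.2 hA).ne'
  have hc0 : c ≠ 0 := (sqrt_pos.2 hC).ne'
  obtain rfl : ξ = fun τ => orbitXi a c s r B (c * r * τ) := by rw [hξ, sqrt_div hg0.le]; rfl
  obtain rfl : η = fun τ => orbitEta a s B (c * r * τ) := by rw [hη, sqrt_div hg0.le]; rfl
  rw [← ha, ← hc, div_eq_inv_mul]
  exact ⟨fun τ => hD _,
    fun τ => ⟨hasDerivAt_orbitXi_comp_mul ha0 hc0 hr (hD _),
      hasDerivAt_orbitEta_comp_mul ha0 (hD _)⟩,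
    (orbitXi_periodic a c s r B).const_mul (c * r), (orbitEta_periodic a s B).const_mul (c * r),
    fun τ => hs ▸ orbit_first_integral ha0 hc0 hr (hD _)⟩

/-- The explicit periodic solutions of the normal-form system `ξ' = −A(η − B)η`, `η' = Cξη`
on the level sets `G = g` with `0 < g < AB²`. -/
theorem normal_form_periodic_solutions
    (A B C g : ℝ)
    (hA : 0 < A) (hC : 0 < C) (hB : B ≠ 0)
    (hg0 : 0 < g) (hg : g < A * B ^ 2)
    (ξ η : ℝ → ℝ)
    (hξ : ξ = fun τ : ℝ => Real.sqrt (g / C) *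
      (Real.sqrt (A * B ^ 2 - g) * Real.sin (Real.sqrt C * Real.sqrt (A * B ^ 2 - g) * τ)) /
      (Real.sqrt A * B + Real.sqrt g * Real.cos (Real.sqrt C * Real.sqrt (A * B ^ 2 - g) * τ)))
    (hη : η = fun τ : ℝ => -(Real.sqrt (g / A) *
      (Real.sqrt g + Real.sqrt A * B * Real.cos (Real.sqrt C * Real.sqrt (A * B ^ 2 - g) * τ)) /
      (Real.sqrt A * B + Real.sqrt g * Real.cos (Real.sqrt C * Real.sqrt (A * B ^ 2 - g) * τ))) +
      B) :
    (∀ τ : ℝ,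
      Real.sqrt A * B + Real.sqrt g * Real.cos (Real.sqrt C * Real.sqrt (A * B ^ 2 - g) * τ) ≠ 0) ∧
    (∀ τ : ℝ, HasDerivAt ξ (-A * (η τ - B) * η τ) τ ∧ HasDerivAt η (C * ξ τ * η τ) τ) ∧
    Function.Periodic ξ (2 * Real.pi / (Real.sqrt C * Real.sqrt (A * B ^ 2 - g))) ∧
    Function.Periodic η (2 * Real.pi / (Real.sqrt C * Real.sqrt (A * B ^ 2 - g))) ∧
    ∀ τ : ℝ, A * (η τ - B) ^ 2 + C * (ξ τ) ^ 2 = g :=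
  normal_form_periodic_solutions_general A B C g hA hC hg0 hg ξ η hξ hη
end

section
/- Let A, B, C be real numbers with A > 0, C > 0 and B ≠ 0. Then the functions ξ(τ) = −2AB²τ/(ACB²τ² + 1) and η(τ) = 2B/(ACB²τ² + 1) satisfy ξ' = −A (η − B) η and η' = C ξ η on all of ℝ, satisfy A (η(τ) − B)² + C ξ(τ)² = AB² for all τ, and (ξ(τ), η(τ)) → (0, 0) as τ → +∞ and as τ → −∞. -/
open Filter Topology

/-!
Along the orbit `η = 2B / (kτ² + 1)` with `k = ACB² > 0`, so `η → 0` as `|τ| → ∞`. On the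
critical level the first integral reads `Cξ² = Aη(2B − η)`, which forces `ξ → 0` as well.
-/

section LorentzProfile

variable {k : ℝ}

lemma hasDerivAt_div_sq_add_one (hk : 0 ≤ k) (b τ : ℝ) :
    HasDerivAt (fun τ : ℝ => b / (k * τ ^ 2 + 1)) (-(2 * b * k * τ) / (k * τ ^ 2 + 1) ^ 2) τ := by
  have hD : HasDerivAt (fun τ : ℝ => k * τ ^ 2 + 1) (k * (2 * τ)) τ := by
    simpa using ((hasDerivAt_pow 2 τ).const_mul k).add_const 1
  exact ((hasDerivAt_const τ b).div hD (by positivity)).congr_deriv (by ring)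

lemma hasDerivAt_mul_div_sq_add_one (hk : 0 ≤ k) (a τ : ℝ) :
    HasDerivAt (fun τ : ℝ => a * τ / (k * τ ^ 2 + 1))
      (a * (1 - k * τ ^ 2) / (k * τ ^ 2 + 1) ^ 2) τ := by
  have hD : HasDerivAt (fun τ : ℝ => k * τ ^ 2 + 1) (k * (2 * τ)) τ := by
    simpa using ((hasDerivAt_pow 2 τ).const_mul k).add_const 1
  exact (((hasDerivAt_id' τ).const_mul a).div hD (by positivity)).congr_deriv (by ring)

lemma tendsto_div_sq_add_one_cocompact (hk : 0 < k) (b : ℝ) :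
    Tendsto (fun τ : ℝ => b / (k * τ ^ 2 + 1)) (cocompact ℝ) (𝓝 0) := by
  have hsq : Tendsto (fun τ : ℝ => τ ^ 2) (cocompact ℝ) atTop := by
    simpa only [Function.comp_def, Real.norm_eq_abs, sq_abs] using
      (tendsto_pow_atTop two_ne_zero).comp (tendsto_norm_cocompact_atTop (E := ℝ))
  exact tendsto_const_nhds.div_atTop
    (tendsto_atTop_add_const_right _ 1 (hsq.const_mul_atTop hk))

end LorentzProfile

lemma tendsto_zero_of_critical_level {α : Type*} {l : Filter α} {A B C : ℝ} (hC : 0 < C)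
    {ξ η : α → ℝ} (hG : ∀ t, A * (η t - B) ^ 2 + C * ξ t ^ 2 = A * B ^ 2)
    (hη : Tendsto η l (𝓝 0)) : Tendsto ξ l (𝓝 0) := by
  have hξ_sq : ∀ t, ξ t ^ 2 = A * η t * (2 * B - η t) / C := fun t => by
    field_simp
    linear_combination hG t
  have hlim : Tendsto (fun t => A * η t * (2 * B - η t) / C) l (𝓝 0) := by
    simpa using ((hη.const_mul A).mul (hη.const_sub (2 * B))).div_const C
  rw [tendsto_zero_iff_abs_tendsto_zero, Function.comp_def]
  simpa [← hξ_sq, Real.sqrt_sq_eq_abs] using hlim.sqrt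

/-- The explicit rational solution of the normal-form system `ξ' = −A(η − B)η`, `η' = Cξη`
on the critical level `G = AB²`, homoclinic to the equilibrium `(0, 0)`. -/
theorem normal_form_homoclinic_solution
    (A B C : ℝ)
    (hA : 0 < A) (hC : 0 < C) (hB : B ≠ 0)
    (ξ η : ℝ → ℝ)
    (hξ : ξ = fun τ : ℝ => -2 * A * B ^ 2 * τ / (A * C * B ^ 2 * τ ^ 2 + 1))
    (hη : η = fun τ : ℝ => 2 * B / (A * C * B ^ 2 * τ ^ 2 + 1)) :
    (∀ τ : ℝ, HasDerivAt ξ (-A * (η τ - B) * η τ) τ ∧ HasDerivAt η (C * ξ τ * η τ) τ) ∧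
    (∀ τ : ℝ, A * (η τ - B) ^ 2 + C * (ξ τ) ^ 2 = A * B ^ 2) ∧
    Tendsto (fun τ : ℝ => (ξ τ, η τ)) atTop (𝓝 (0, 0)) ∧
    Tendsto (fun τ : ℝ => (ξ τ, η τ)) atBot (𝓝 (0, 0)) := by
  have hk : 0 < A * C * B ^ 2 := by positivity
  have hD : ∀ τ : ℝ, A * C * B ^ 2 * τ ^ 2 + 1 ≠ 0 := fun τ => by positivity
  subst hξ hη
  have hG : ∀ τ : ℝ, A * (2 * B / (A * C * B ^ 2 * τ ^ 2 + 1) - B) ^ 2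
      + C * (-2 * A * B ^ 2 * τ / (A * C * B ^ 2 * τ ^ 2 + 1)) ^ 2 = A * B ^ 2 := fun τ => by
    field_simp [hD τ]
    ring
  have hη_lim := tendsto_div_sq_add_one_cocompact hk (2 * B)
  have hlim := (tendsto_zero_of_critical_level hC hG hη_lim).prodMk_nhds hη_lim
  refine ⟨fun τ => ⟨?_, ?_⟩, hG, hlim.mono_left atTop_le_cocompact,
    hlim.mono_left atBot_le_cocompact⟩
  · refine (hasDerivAt_mul_div_sq_add_one hk.le _ τ).congr_deriv ?_
    field_simp [hD τ]
    ring
  · refine (hasDerivAt_div_sq_add_one hk.le _ τ).congr_deriv ?_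
    field_simp [hD τ]
end

section
/- Let a, b, p₃ be complex numbers with a ≠ 0, and let u₀(ζ) = 2a² exp(aζ + b)/(exp(2(aζ + b)) − a² p₃). Then on any domain where exp(2(aζ + b)) ≠ a² p₃ and u₀(ζ) ≠ 0, u₀ satisfies the differential equation u₀'' = (u₀')²/u₀ + p₃ u₀³. -/
/-!
With `w = exp (a ζ + b)` one has `u₀ = 2a² / D` for `D = w - a² p₃ / w`, and `D'' = a² D`.
For any such `D`, the function `u = c / D` satisfies `u'' = u'² / u + κ u³` with
`κ = (D'² - a² D²) / c²`; here the first integral `D'² - a² D²` is the constant `4 a⁴ p₃`,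
so `κ = p₃`.
-/

open Topology Complex

section ConstDiv

variable {𝕜 : Type*} [NontriviallyNormedField 𝕜] {D D' : 𝕜 → 𝕜} {a c d'' x : 𝕜}

theorem deriv_deriv_const_div (hD : ∀ᶠ y in 𝓝 x, HasDerivAt D (D' y) y)
    (hD' : HasDerivAt D' d'' x) (hx : D x ≠ 0) :
    deriv (deriv fun y => c / D y) x = c * (2 * D' x ^ 2 - D x * d'') / D x ^ 3 := by
  have hne : ∀ᶠ y in 𝓝 x, D y ≠ 0 := hD.self_of_nhds.continuousAt.eventually_ne hx
  have hfirst : deriv (fun y => c / D y) =ᶠ[𝓝 x] fun y => -c * D' y / D y ^ 2 := by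
    filter_upwards [hD, hne] with y hy hy0
    rw [deriv_const_div c hy.differentiableAt hy0, hy.deriv]
  rw [hfirst.deriv_eq,
    ((hD'.const_mul (-c)).fun_div (hD.self_of_nhds.fun_pow 2) (pow_ne_zero 2 hx)).deriv]
  field_simp
  ring

theorem deriv_deriv_const_div_of_hasDerivAt_sq_mul (hD : ∀ᶠ y in 𝓝 x, HasDerivAt D (D' y) y)
    (hD' : HasDerivAt D' (a ^ 2 * D x) x) (hx : D x ≠ 0) (hc : c ≠ 0) :
    deriv (deriv fun y => c / D y) x = (deriv (fun y => c / D y) x) ^ 2 / (c / D x)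
      + (D' x ^ 2 - a ^ 2 * D x ^ 2) / c ^ 2 * (c / D x) ^ 3 := by
  rw [deriv_deriv_const_div hD hD' hx,
    deriv_const_div c hD.self_of_nhds.differentiableAt hx, hD.self_of_nhds.deriv]
  field_simp
  ring

end ConstDiv

section ExpSum

variable (a b s z : ℂ)

theorem hasDerivAt_exp_sub_mul_exp_neg :
    HasDerivAt (fun z => exp (a * z + b) - s * exp (-(a * z + b)))
      (a * (exp (a * z + b) + s * exp (-(a * z + b)))) z := by
  have hlin : HasDerivAt (fun z => a * z + b) a z := by
    simpa using ((hasDerivAt_id z).const_mul a).add_const b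
  exact (hlin.cexp.fun_sub (hlin.fun_neg.cexp.const_mul s)).congr_deriv (by ring)

theorem hasDerivAt_mul_exp_add_mul_exp_neg :
    HasDerivAt (fun z => a * (exp (a * z + b) + s * exp (-(a * z + b))))
      (a ^ 2 * (exp (a * z + b) - s * exp (-(a * z + b)))) z := by
  have hlin : HasDerivAt (fun z => a * z + b) a z := by
    simpa using ((hasDerivAt_id z).const_mul a).add_const b
  exact ((hlin.cexp.fun_add (hlin.fun_neg.cexp.const_mul s)).const_mul a).congr_deriv (by ring)

end ExpSum

/-- The general solution `u₀(ζ) = 2a² exp(aζ + b)/(exp(2(aζ + b)) − a²p₃)` of the leading-order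
equation `u₀'' = (u₀')²/u₀ + p₃u₀³` arising in Painlevé's α-method for the inhomogeneous
Suslov problem. -/
theorem painleve_leading_order_solution
    (a b p3 : ℂ) (ha : a ≠ 0)
    (u0 : ℂ → ℂ)
    (hu0 : u0 = fun ζ : ℂ =>
      2 * a ^ 2 * Complex.exp (a * ζ + b) / (Complex.exp (2 * (a * ζ + b)) - a ^ 2 * p3)) :
    ∀ ζ : ℂ, Complex.exp (2 * (a * ζ + b)) ≠ a ^ 2 * p3 → u0 ζ ≠ 0 →
      deriv (deriv u0) ζ = (deriv u0 ζ) ^ 2 / u0 ζ + p3 * (u0 ζ) ^ 3 := by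
  intro ζ hζ _
  have hexp_sq (z : ℂ) : exp (2 * (a * z + b)) = exp (a * z + b) ^ 2 := by
    rw [← exp_nat_mul]; push_cast; rfl
  have hu0D : u0 = fun z => 2 * a ^ 2 / (exp (a * z + b) - a ^ 2 * p3 * exp (-(a * z + b))) := by
    subst hu0; funext z
    rw [hexp_sq, exp_neg]
    field_simp
  have hDζ : exp (a * ζ + b) - a ^ 2 * p3 * exp (-(a * ζ + b)) ≠ 0 := by
    rw [hexp_sq] at hζ
    rw [exp_neg]
    field_simp
    exact div_ne_zero (sub_ne_zero.mpr hζ) (exp_ne_zero _)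
  have hfirst_integral : ((a * (exp (a * ζ + b) + a ^ 2 * p3 * exp (-(a * ζ + b)))) ^ 2
      - a ^ 2 * (exp (a * ζ + b) - a ^ 2 * p3 * exp (-(a * ζ + b))) ^ 2) / (2 * a ^ 2) ^ 2
      = p3 := by
    rw [exp_neg]
    field_simp
    ring
  rw [hu0D, deriv_deriv_const_div_of_hasDerivAt_sq_mul
    (.of_forall (hasDerivAt_exp_sub_mul_exp_neg a b _))
    (hasDerivAt_mul_exp_add_mul_exp_neg a b _ ζ) hDζ (by simpa using ha), hfirst_integral]
end
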